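/- arXiv:1211.5884 — 8 statements merged into one kernel-verified Lean document; each statement's English description precedes it below -/
import Mathlib

section
/- Let A and B be Hermitian positive semidefinite matrices over ℂ of the same size, written in the same 2×2 block form with square leading diagonal blocks A₁₁ and B₁₁ of equal size that are Hermitian positive definite. Then det(A+B) · det(B₁₁) ≥ det(B) · det(A₁₁+B₁₁); equivalently, when det(B) > 0, det(A+B)/det(B) ≥ det(A₁₁+B₁₁)/det(B₁₁). -/
open Matrix
open scoped ComplexOrder MatrixOrder

/-!
Write `S(M)` for the Schur complement of the leading block of `M`, so that
`det M = det M₁₁ · det S(M)`. The Schur complement is monotone in the Loewner order, because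
`y* S(M) y` is the minimum over `x` of the quadratic form of `M` at `(x, y)`. Since `B ≤ A + B`,
this gives `S(B) ≤ S(A + B)`, and the determinant is monotone on positive semidefinite matrices.
Hence `det (A + B) · det B₁₁ = det (A₁₁ + B₁₁) · det S(A + B) · det B₁₁
≥ det (A₁₁ + B₁₁) · det S(B) · det B₁₁ = det (A₁₁ + B₁₁) · det B`.
-/

theorem Complex.re_mul_re_le_of_mul_le {a b c d : ℂ} (ha : 0 ≤ a) (hc : 0 ≤ c)
    (h : a * b ≤ c * d) : a.re * b.re ≤ c.re * d.re := by
  have hre := (Complex.le_def.mp h).1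
  simpa [Complex.mul_re, ← (Complex.nonneg_iff.mp ha).2, ← (Complex.nonneg_iff.mp hc).2]
    using hre

namespace Matrix

theorem det_fromBlocks_of_isUnit {m n α : Type*} [Fintype m] [Fintype n] [DecidableEq m]
    [DecidableEq n] [CommRing α] {A : Matrix m m α} (hA : IsUnit A) (B : Matrix m n α)
    (C : Matrix n m α) (D : Matrix n n α) :
    (fromBlocks A B C D).det = A.det * (D - C * A⁻¹ * B).det := by
  let := hA.invertible
  rw [det_fromBlocks₁₁, invOf_eq_nonsing_inv]

variable {𝕜 m n : Type*} [RCLike 𝕜] [Fintype m] [Fintype n]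

theorem schur_complement_mono [DecidableEq m] {A A' : Matrix m m 𝕜} {B B' : Matrix m n 𝕜}
    {D D' : Matrix n n 𝕜} (hA : A.PosDef) (hA' : A'.PosDef)
    (h : fromBlocks A B Bᴴ D ≤ fromBlocks A' B' B'ᴴ D') :
    D - Bᴴ * A⁻¹ * B ≤ D' - B'ᴴ * A'⁻¹ * B' := by
  let := hA.isUnit.invertible
  let := hA'.isUnit.invertible
  have hD : (D' - D).IsHermitian := by
    convert h.isHermitian.submatrix Sum.inr using 1
    ext; simp
  have hH : (D' - B'ᴴ * A'⁻¹ * B' - (D - Bᴴ * A⁻¹ * B)).IsHermitian := by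
    rw [sub_sub_sub_comm]
    exact hD.sub ((isHermitian_conjTranspose_mul_mul B' hA'.1.inv).sub
      (isHermitian_conjTranspose_mul_mul B hA.1.inv))
  refine .of_dotProduct_mulVec_nonneg hH fun y => ?_
  -- `x = -A'⁻¹ B' y` kills the first summand in `schur_complement_eq₁₁` for `A'`
  have hq := h.dotProduct_mulVec_nonneg (-((A'⁻¹ * B') *ᵥ y) ⊕ᵥ y)
  rw [sub_mulVec, dotProduct_sub, sub_nonneg, dotProduct_mulVec, dotProduct_mulVec,
    schur_complement_eq₁₁ B D _ y hA.1, schur_complement_eq₁₁ B' D' _ y hA'.1, neg_add_cancel,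
    dotProduct_zero, zero_add] at hq
  rw [sub_mulVec, dotProduct_sub, sub_nonneg, dotProduct_mulVec, dotProduct_mulVec]
  refine (le_add_of_nonneg_left ?_).trans hq
  rw [← dotProduct_mulVec]
  exact hA.posSemidef.dotProduct_mulVec_nonneg _

variable [DecidableEq n]

theorem one_le_det_of_one_le {M : Matrix n n 𝕜} (hM : 1 ≤ M) : 1 ≤ M.det := by
  have hM' : M.IsHermitian := (zero_le_one.trans hM).posSemidef.isHermitian
  have heig : ∀ i, 1 ≤ hM'.eigenvalues i := fun i =>
    (CFC.one_le_iff M).mp hM _ (hM'.eigenvalues_mem_spectrum_real i)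
  rw [hM'.det_eq_prod_eigenvalues, ← RCLike.ofReal_prod]
  exact_mod_cast Finset.one_le_prod fun i _ => heig i

theorem det_le_det_of_le {S T : Matrix n n 𝕜} (hT : 0 ≤ T) (hTS : T ≤ S) : T.det ≤ S.det := by
  by_cases hdet : T.det = 0
  · exact hdet ▸ (hT.trans hTS).posSemidef.det_nonneg
  -- with `R = √T`, `S = R (R⁻¹ S R⁻¹) R` and `1 = R⁻¹ T R⁻¹ ≤ R⁻¹ S R⁻¹`
  set R := CFC.sqrt T
  have hRR : R * R = T := CFC.sqrt_mul_sqrt_self T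
  have hR : IsUnit R.det := isUnit_of_mul_isUnit_left (by rw [← det_mul, hRR]; exact .mk0 _ hdet)
  have hRinv : IsSelfAdjoint R⁻¹ := (CFC.sqrt_nonneg T).posSemidef.isHermitian.inv
  have hone : 1 ≤ R⁻¹ * S * R⁻¹ := calc
    1 = R⁻¹ * T * R⁻¹ := by
      rw [← hRR, ← Matrix.mul_assoc, nonsing_inv_mul _ hR, one_mul, mul_nonsing_inv _ hR]
    _ ≤ R⁻¹ * S * R⁻¹ := hRinv.conjugate_le_conjugate hTS
  have hdetS : S.det = T.det * (R⁻¹ * S * R⁻¹).det := by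
    rw [← hRR, det_mul, det_mul, det_mul, det_nonsing_inv, Ring.inverse_eq_inv']
    field_simp [hR.ne_zero]
  rw [hdetS]
  exact le_mul_of_one_le_right hT.posSemidef.det_nonneg (one_le_det_of_one_le hone)

end Matrix

theorem stmt_1_general {m n : Type*} [Fintype m] [Fintype n] [DecidableEq m] [DecidableEq n]
    (A₁₁ B₁₁ : Matrix m m ℂ) (A₁₂ B₁₂ : Matrix m n ℂ)
    (A₂₁ B₂₁ : Matrix n m ℂ) (A₂₂ B₂₂ : Matrix n n ℂ)
    (hA : (Matrix.fromBlocks A₁₁ A₁₂ A₂₁ A₂₂).PosSemidef)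
    (hB : (Matrix.fromBlocks B₁₁ B₁₂ B₂₁ B₂₂).PosSemidef)
    (hB11 : B₁₁.PosDef) :
    ((Matrix.fromBlocks A₁₁ A₁₂ A₂₁ A₂₂ + Matrix.fromBlocks B₁₁ B₁₂ B₂₁ B₂₂).det).re
        * (B₁₁.det).re
      ≥ ((Matrix.fromBlocks B₁₁ B₁₂ B₂₁ B₂₂).det).re * ((A₁₁ + B₁₁).det).re := by
  obtain rfl : A₂₁ = A₁₂ᴴ := (isHermitian_fromBlocks_iff.mp hA.1).2.1.symm
  obtain rfl : B₂₁ = B₁₂ᴴ := (isHermitian_fromBlocks_iff.mp hB.1).2.1.symm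
  have hP : (A₁₁ + B₁₁).PosDef := PosDef.posSemidef_add (hA.submatrix Sum.inl) hB11
  have hsum : fromBlocks A₁₁ A₁₂ A₁₂ᴴ A₂₂ + fromBlocks B₁₁ B₁₂ B₁₂ᴴ B₂₂ =
      fromBlocks (A₁₁ + B₁₁) (A₁₂ + B₁₂) (A₁₂ + B₁₂)ᴴ (A₂₂ + B₂₂) := by
    rw [fromBlocks_add, conjTranspose_add]
  have hle : fromBlocks B₁₁ B₁₂ B₁₂ᴴ B₂₂ ≤
      fromBlocks (A₁₁ + B₁₁) (A₁₂ + B₁₂) (A₁₂ + B₁₂)ᴴ (A₂₂ + B₂₂) :=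
    hsum ▸ le_add_of_nonneg_left hA.nonneg
  let := hB11.isUnit.invertible
  have hT : 0 ≤ B₂₂ - B₁₂ᴴ * B₁₁⁻¹ * B₁₂ := ((PosDef.fromBlocks₁₁ _ _ hB11).mp hB).nonneg
  have hS := det_le_det_of_le hT (schur_complement_mono hB11 hP hle)
  refine Complex.re_mul_re_le_of_mul_le hB.det_nonneg (hA.add hB).det_nonneg ?_
  rw [hsum, det_fromBlocks_of_isUnit hP.isUnit, det_fromBlocks_of_isUnit hB11.isUnit]
  calc _ = (A₁₁ + B₁₁).det * B₁₁.det * (B₂₂ - B₁₂ᴴ * B₁₁⁻¹ * B₁₂).det := by ring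
    _ ≤ _ := mul_le_mul_of_nonneg_left hS (mul_nonneg hP.det_pos.le hB11.det_pos.le)
    _ = _ := by ring

/-- Lemma 1 (second inequality): for Hermitian PSD block matrices `A`, `B` with
positive definite leading blocks, `det(A+B)·det(B₁₁) ≥ det(B)·det(A₁₁+B₁₁)`. -/
theorem stmt_1 {m n : Type*} [Fintype m] [Fintype n] [DecidableEq m] [DecidableEq n]
    (A₁₁ B₁₁ : Matrix m m ℂ) (A₁₂ B₁₂ : Matrix m n ℂ)
    (A₂₁ B₂₁ : Matrix n m ℂ) (A₂₂ B₂₂ : Matrix n n ℂ)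
    (hA : (Matrix.fromBlocks A₁₁ A₁₂ A₂₁ A₂₂).PosSemidef)
    (hB : (Matrix.fromBlocks B₁₁ B₁₂ B₂₁ B₂₂).PosSemidef)
    (hA11 : A₁₁.PosDef) (hB11 : B₁₁.PosDef) :
    ((Matrix.fromBlocks A₁₁ A₁₂ A₂₁ A₂₂ + Matrix.fromBlocks B₁₁ B₁₂ B₂₁ B₂₂).det).re
        * (B₁₁.det).re
      ≥ ((Matrix.fromBlocks B₁₁ B₁₂ B₂₁ B₂₂).det).re * ((A₁₁ + B₁₁).det).re :=
  stmt_1_general A₁₁ B₁₁ A₁₂ B₁₂ A₂₁ B₂₁ A₂₂ B₂₂ hA hB hB11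
end

section
/- Let B and C be n×n Hermitian matrices over ℂ with C ⪰ B (i.e., C − B positive semidefinite) and B positive definite. Then det(C)/det(B) ≥ tr(C)/tr(B); equivalently det(C)·tr(B) ≥ det(B)·tr(C). -/
/-!
Write `B = S²` with `S = √B` and put `M = S⁻¹ C S⁻¹`. From `B ≤ C` we get `1 ≤ M`, so every
eigenvalue of `M` is at least `1` and hence at most their product `det M = det C / det B`.
Thus `M ≤ (det M) • 1`, and conjugating back by `S` gives `det B • C ≤ det C • B` in the
Loewner order; taking traces gives the inequality.
-/

open Matrix
open scoped ComplexOrder MatrixOrder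

variable {n 𝕜 : Type*} [Fintype n] [DecidableEq n] [RCLike 𝕜]

namespace Matrix

lemma le_det_smul_one_of_one_le {M : Matrix n n 𝕜} (h : 1 ≤ M) : M ≤ M.det • 1 := by
  have hM : M.IsHermitian := by
    simpa using (sub_nonneg.mpr h).posSemidef.isHermitian.add isHermitian_one
  have hspec : ∀ x ∈ spectrum ℝ M, 1 ≤ x :=
    (algebraMap_le_iff_le_spectrum (r := (1 : ℝ)) (a := M)).mp (by simpa using h)
  have heig : ∀ i, 1 ≤ hM.eigenvalues i := fun i =>
    hspec _ (hM.spectrum_real_eq_range_eigenvalues ▸ Set.mem_range_self i)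
  have hdet : M.det • (1 : Matrix n n 𝕜) = algebraMap ℝ _ (∏ i, hM.eigenvalues i) := by
    rw [hM.det_eq_prod_eigenvalues, Algebra.algebraMap_eq_smul_one, ← RCLike.ofReal_prod,
      RCLike.real_smul_eq_coe_smul (K := 𝕜)]
  rw [hdet, le_algebraMap_iff_spectrum_le, hM.spectrum_real_eq_range_eigenvalues]
  rintro _ ⟨i, rfl⟩
  exact Multiset.mem_le_prod_of_one_le heig (Finset.mem_univ i)

lemma PosDef.det_smul_le_det_smul_of_le {B C : Matrix n n 𝕜} (hB : B.PosDef) (hBC : B ≤ C) :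
    B.det • C ≤ C.det • B := by
  set S := CFC.sqrt B
  have hS : S.IsHermitian := (CFC.sqrt_nonneg B).posSemidef.isHermitian
  have hSS : S * S = B := CFC.sqrt_mul_sqrt_self B hB.posSemidef.nonneg
  have hSdet : IsUnit S.det :=
    (isUnit_iff_isUnit_det S).mp ((CFC.isUnit_sqrt_iff B hB.posSemidef.nonneg).mpr hB.isUnit)
  set M := S⁻¹ * C * S⁻¹
  have hM : 1 ≤ M := by
    have := IsSelfAdjoint.conjugate_le_conjugate hBC hS.inv
    rwa [← hSS, ← Matrix.mul_assoc, nonsing_inv_mul S hSdet, Matrix.one_mul,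
      mul_nonsing_inv S hSdet] at this
  have hC : S * M * S = C := by
    simp only [M, ← Matrix.mul_assoc, mul_nonsing_inv S hSdet, Matrix.one_mul]
    rw [Matrix.mul_assoc, nonsing_inv_mul S hSdet, Matrix.mul_one]
  have hCdet : C.det = B.det * M.det := by
    calc C.det = (S * M * S).det := by rw [hC]
      _ = (S * S).det * M.det := by rw [det_mul, det_mul, det_mul S S]; ring
      _ = B.det * M.det := by rw [hSS]
  have hC_le : C ≤ M.det • B := by
    simpa [hC, ← hSS, Matrix.mul_assoc] using
      IsSelfAdjoint.conjugate_le_conjugate (le_det_smul_one_of_one_le hM) hS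
  rw [hCdet, mul_smul, le_iff, ← smul_sub]
  exact (le_iff.mp hC_le).smul hB.det_pos.le

lemma IsHermitian.coe_re_det {A : Matrix n n 𝕜} (hA : A.IsHermitian) :
    (RCLike.re A.det : 𝕜) = A.det := by
  rw [hA.det_eq_prod_eigenvalues, ← RCLike.ofReal_prod, RCLike.ofReal_re]

lemma IsHermitian.coe_re_trace {A : Matrix n n 𝕜} (hA : A.IsHermitian) :
    (RCLike.re A.trace : 𝕜) = A.trace := by
  rw [hA.trace_eq_sum_eigenvalues, ← RCLike.ofReal_sum, RCLike.ofReal_re]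

end Matrix

/-- Lemma 2: if `C ⪰ B ⪰ 0` with `B` positive definite Hermitian, then
`det(C)·tr(B) ≥ det(B)·tr(C)`, i.e. `det(C)/det(B) ≥ tr(C)/tr(B)`. -/
theorem stmt_2 {n : ℕ} (B C : Matrix (Fin n) (Fin n) ℂ)
    (hB : B.PosDef) (hC : C.IsHermitian) (hCB : (C - B).PosSemidef) :
    (C.det).re * (B.trace).re ≥ (B.det).re * (C.trace).re := by
  have h : 0 ≤ (C.det • B - B.det • C).trace :=
    (le_iff.mp (hB.det_smul_le_det_smul_of_le (le_iff.mpr hCB))).trace_nonneg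
  rw [trace_sub, trace_smul, trace_smul, smul_eq_mul, smul_eq_mul, ← hB.isHermitian.coe_re_det,
    ← hC.coe_re_det, ← hB.isHermitian.coe_re_trace, ← hC.coe_re_trace] at h
  norm_cast at h
  rw [RCLike.ofReal_nonneg, sub_nonneg] at h
  exact h
end

section
/- Let B be an N×N Hermitian positive definite matrix over ℂ, A an N×N Hermitian positive semidefinite matrix, and set C = A + B. Let V ∈ ℂ^{N×d} have orthonormal columns, i.e., VᴴV = I_d. Then det(B⁻¹C) ≥ det((VᴴBV)⁻¹(VᴴCV)); equivalently det(C)·det(VᴴBV) ≥ det(B)·det(VᴴCV). (Here VᴴBV is positive definite, hence invertible.) -/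
/-!
Write `A = KᴴK` and `G = VᴴBV`. The matrix determinant lemma gives
`det (A + B) = det B · det (1 + K B⁻¹ Kᴴ)` and `det (Vᴴ (A + B) V) = det G · det (1 + K V G⁻¹ Vᴴ Kᴴ)`.
A Schur complement argument shows `V G⁻¹ Vᴴ ⪯ B⁻¹`, so the second matrix `1 + K V G⁻¹ Vᴴ Kᴴ`
lies below the first in the Loewner order, and the determinant is monotone on positive
semidefinite matrices.
-/

open Matrix
open scoped ComplexOrder

namespace Matrix

variable {𝕜 n m : Type*} [RCLike 𝕜] [Fintype n] [DecidableEq n] [Fintype m] [DecidableEq m]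

theorem PosSemidef.one_le_det_one_add {P : Matrix n n 𝕜} (hP : P.PosSemidef) :
    1 ≤ (1 + P).det := by
  have hH := hP.isHermitian
  conv_rhs => rw [hH.spectral_theorem]
  rw [← map_one (Unitary.conjStarAlgAut 𝕜 _ hH.eigenvectorUnitary), ← map_add,
    Unitary.conjStarAlgAut_apply, det_mul_right_comm,
    Unitary.mul_star_self_of_mem hH.eigenvectorUnitary.2, one_mul,
    ← diagonal_one, diagonal_add, det_diagonal]
  have : (1 : ℝ) ≤ ∏ i, (1 + hH.eigenvalues i) :=
    Finset.one_le_prod fun i _ => le_add_of_nonneg_right (hP.eigenvalues_nonneg i)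
  simp only [Function.comp_apply]
  exact_mod_cast (RCLike.ofReal_le_ofReal (K := 𝕜)).mpr this

theorem PosSemidef.det_le_det {X Y : Matrix n n 𝕜} (hX : X.PosSemidef)
    (hXY : (Y - X).PosSemidef) : X.det ≤ Y.det := by
  by_cases hdet : X.det = 0
  · rw [hdet]
    simpa using (hXY.add hX).det_nonneg
  obtain ⟨R, rfl⟩ : ∃ R : Matrix n n 𝕜, X = Rᴴ * R := by
    open scoped MatrixOrder in exact CStarAlgebra.nonneg_iff_eq_star_mul_self.mp hX.nonneg
  have hR : IsUnit R.det := by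
    refine isUnit_iff_ne_zero.mpr fun h => hdet ?_
    rw [det_mul, h, mul_zero]
  set P := (R⁻¹)ᴴ * (Y - Rᴴ * R) * R⁻¹
  have hR' : IsUnit Rᴴ.det := by rwa [det_conjTranspose, isUnit_star]
  have hY : Rᴴ * (1 + P) * R = Y := by
    simp only [P, Matrix.mul_add, Matrix.add_mul, Matrix.mul_one, Matrix.mul_assoc,
      conjTranspose_nonsing_inv, mul_nonsing_inv_cancel_left _ _ hR', nonsing_inv_mul _ hR]
    abel
  have hP : P.PosSemidef := hXY.conjTranspose_mul_mul_same R⁻¹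
  calc (Rᴴ * R).det = (Rᴴ * R).det * 1 := (mul_one _).symm
    _ ≤ (Rᴴ * R).det * (1 + P).det :=
      mul_le_mul_of_nonneg_left hP.one_le_det_one_add hX.det_nonneg
    _ = Y.det := by rw [← hY, det_mul, det_mul, det_mul]; ring

-- The block matrix `[[VᴴBV, Vᴴ], [V, B⁻¹]] = [V, B⁻¹]ᴴ B [V, B⁻¹]` is positive semidefinite,
-- and its Schur complement with respect to `VᴴBV` is the matrix in question.
theorem PosDef.posSemidef_inv_sub_compression {B : Matrix n n 𝕜} (hB : B.PosDef)
    (V : Matrix n m 𝕜) (hG : (Vᴴ * B * V).PosDef) :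
    (B⁻¹ - V * (Vᴴ * B * V)⁻¹ * Vᴴ).PosSemidef := by
  have := hG.isUnit.invertible
  have := hB.isUnit.invertible
  have hBinv : B⁻¹ᴴ = B⁻¹ := by rw [conjTranspose_nonsing_inv, hB.isHermitian.eq]
  have hblock :
      fromBlocks (Vᴴ * B * V) Vᴴ Vᴴᴴ B⁻¹ = (fromCols V B⁻¹)ᴴ * B * fromCols V B⁻¹ := by
    rw [conjTranspose_fromCols_eq_fromRows_conjTranspose, fromRows_mul, fromRows_mul_fromCols,
      hBinv]
    simp [Matrix.mul_assoc]
  have := (PosDef.fromBlocks₁₁ Vᴴ B⁻¹ hG).mp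
    (hblock ▸ hB.posSemidef.conjTranspose_mul_mul_same _)
  rwa [conjTranspose_conjTranspose] at this

theorem det_mul_det_compression_le {A B : Matrix n n 𝕜} (hA : A.PosSemidef) (hB : B.PosDef)
    (V : Matrix n m 𝕜) (hG : (Vᴴ * B * V).PosDef) :
    B.det * (Vᴴ * (A + B) * V).det ≤ (A + B).det * (Vᴴ * B * V).det := by
  obtain ⟨K, rfl⟩ : ∃ K : Matrix n n 𝕜, A = Kᴴ * K := by
    open scoped MatrixOrder in exact CStarAlgebra.nonneg_iff_eq_star_mul_self.mp hA.nonneg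
  set G := Vᴴ * B * V
  have hdetC : (Kᴴ * K + B).det = B.det * (1 + K * B⁻¹ * Kᴴ).det := by
    rw [add_comm, det_add_mul _ _ hB.det_pos.ne'.isUnit]
  have hdetVCV : (Vᴴ * (Kᴴ * K + B) * V).det = G.det * (1 + (K * V) * G⁻¹ * (K * V)ᴴ).det := by
    have hVCV : Vᴴ * (Kᴴ * K + B) * V = G + (K * V)ᴴ * (K * V) := by
      simp only [G, Matrix.mul_add, Matrix.add_mul, conjTranspose_mul, Matrix.mul_assoc, add_comm]
    rw [hVCV, det_add_mul _ _ hG.det_pos.ne'.isUnit]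
  have hdet_le : (1 + (K * V) * G⁻¹ * (K * V)ᴴ).det ≤ (1 + K * B⁻¹ * Kᴴ).det := by
    apply PosSemidef.det_le_det
    · exact PosSemidef.one.add (hG.inv.posSemidef.mul_mul_conjTranspose_same (K * V))
    · have hsub : (1 + K * B⁻¹ * Kᴴ) - (1 + (K * V) * G⁻¹ * (K * V)ᴴ)
          = K * (B⁻¹ - V * G⁻¹ * Vᴴ) * Kᴴ := by
        simp only [add_sub_add_left_eq_sub, Matrix.mul_sub, Matrix.sub_mul, conjTranspose_mul,
          Matrix.mul_assoc]
      rw [hsub]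
      exact (hB.posSemidef_inv_sub_compression V hG).mul_mul_conjTranspose_same K
  rw [hdetC, hdetVCV]
  calc B.det * (G.det * (1 + (K * V) * G⁻¹ * (K * V)ᴴ).det)
      = (B.det * G.det) * (1 + (K * V) * G⁻¹ * (K * V)ᴴ).det := by ring
    _ ≤ (B.det * G.det) * (1 + K * B⁻¹ * Kᴴ).det :=
      mul_le_mul_of_nonneg_left hdet_le (mul_nonneg hB.det_pos.le hG.det_pos.le)
    _ = B.det * (1 + K * B⁻¹ * Kᴴ).det * G.det := by ring

theorem PosSemidef.ofReal_re_det {M : Matrix n n ℂ} (hM : M.PosSemidef) :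
    (M.det.re : ℂ) = M.det :=
  (Complex.eq_re_of_ofReal_le (r := 0) (by exact_mod_cast hM.det_nonneg)).symm

end Matrix

/-- Step 1 of the proof of Theorem 1: with `B ≻ 0`, `A ⪰ 0`, `C = A + B` and
`V` having orthonormal columns, `det(B⁻¹C) ≥ det((VᴴBV)⁻¹(VᴴCV))`, stated as
`det(C)·det(VᴴBV) ≥ det(B)·det(VᴴCV)`. -/
theorem stmt_3 {N d : ℕ} (A B : Matrix (Fin N) (Fin N) ℂ)
    (hA : A.PosSemidef) (hB : B.PosDef)
    (V : Matrix (Fin N) (Fin d) ℂ) (hV : Vᴴ * V = 1) :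
    ((A + B).det).re * ((Vᴴ * B * V).det).re
      ≥ (B.det).re * ((Vᴴ * (A + B) * V).det).re := by
  have hV_inj : Function.Injective V.mulVec :=
    Function.LeftInverse.injective (g := Vᴴ.mulVec) fun x => by
      rw [mulVec_mulVec, hV, one_mulVec]
  have hG : (Vᴴ * B * V).PosDef := hB.conjTranspose_mul_mul_same hV_inj
  have hC : (A + B).PosSemidef := hA.add hB.posSemidef
  have key := det_mul_det_compression_le hA hB V hG
  rw [← hB.posSemidef.ofReal_re_det, ← hC.ofReal_re_det, ← hG.posSemidef.ofReal_re_det,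
    ← (hC.conjTranspose_mul_mul_same V).ofReal_re_det] at key
  exact_mod_cast key
end

section
/- (Theorem 1, matrix form.) For each k ∈ {1,…,K}, let A_k be an N_k×N_k Hermitian positive semidefinite matrix over ℂ, B_k an N_k×N_k Hermitian positive definite matrix, C_k = A_k + B_k, and V_k ∈ ℂ^{N_k×d_k} with VₖᴴV_k = I_{d_k}. Then log₂( 1 + (∑_{k=1}^K tr(VₖᴴA_kV_k)) / (∑_{k=1}^K tr(VₖᴴB_kV_k)) ) ≤ ∑_{k=1}^K log₂ det(B_k⁻¹ C_k). (Note: tr(VₖᴴA_kV_k) ≥ 0 and tr(VₖᴴB_kV_k) > 0, so all expressions are well defined.) -/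
/-!
Put `t_k = tr(B_k⁻¹ A_k)`, the sum of the eigenvalues `μ_i ≥ 0` of
`S_k = B_k^{-1/2} A_k B_k^{-1/2}`. Every eigenvalue is at most their sum, so `S_k ⪯ t_k I`,
i.e. `A_k ⪯ t_k B_k`; hence `tr(V_kᴴ A_k V_k) ≤ t_k tr(V_kᴴ B_k V_k)` and the ratio of the sums
is at most `∑ t_k`. On the other side `det(B_k⁻¹ C_k) = det(I + S_k) = ∏ (1 + μ_i) ≥ 1 + t_k`,
and `1 + ∑ t_k ≤ ∏ (1 + t_k)`.
-/

open Matrix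
open scoped ComplexOrder

theorem Finset.one_add_sum_le_prod_one_add {ι R : Type*} [CommSemiring R] [PartialOrder R]
    [IsOrderedRing R] (s : Finset ι) {f : ι → R} (hf : ∀ i ∈ s, 0 ≤ f i) :
    1 + ∑ i ∈ s, f i ≤ ∏ i ∈ s, (1 + f i) := by
  classical
  induction s using Finset.induction_on with
  | empty => simp
  | insert a s ha ih =>
    rw [Finset.forall_mem_insert] at hf
    have hP := ih hf.2
    have hP1 : 1 ≤ ∏ i ∈ s, (1 + f i) :=
      le_trans (le_add_of_nonneg_right (Finset.sum_nonneg hf.2)) hP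
    rw [Finset.sum_insert ha, Finset.prod_insert ha]
    calc 1 + (f a + ∑ i ∈ s, f i) = (1 + ∑ i ∈ s, f i) + f a * 1 := by
          rw [mul_one, add_comm (f a), add_assoc]
      _ ≤ ∏ i ∈ s, (1 + f i) + f a * ∏ i ∈ s, (1 + f i) :=
        add_le_add hP (mul_le_mul_of_nonneg_left hP1 hf.1)
      _ = (1 + f a) * ∏ i ∈ s, (1 + f i) := by ring

theorem Finset.sum_div_sum_le_sum {ι : Type*} (s : Finset ι) {a b c : ι → ℝ}
    (hb : ∀ i ∈ s, 0 ≤ b i) (hc : ∀ i ∈ s, 0 ≤ c i) (habc : ∀ i ∈ s, a i ≤ c i * b i) :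
    (∑ i ∈ s, a i) / ∑ i ∈ s, b i ≤ ∑ i ∈ s, c i := by
  rcases (Finset.sum_nonneg hb).eq_or_lt with hzero | hpos
  · rw [← hzero, div_zero]
    exact Finset.sum_nonneg hc
  rw [div_le_iff₀ hpos, Finset.sum_mul]
  refine Finset.sum_le_sum fun i hi => (habc i hi).trans ?_
  exact mul_le_mul_of_nonneg_left (Finset.single_le_sum hb hi) (hc i hi)

namespace Matrix

variable {𝕜 n m : Type*} [RCLike 𝕜] [Fintype n] [DecidableEq n] [Fintype m]

omit [DecidableEq n] in
lemma PosSemidef.re_trace_nonneg {S : Matrix n n 𝕜} (hS : S.PosSemidef) :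
    0 ≤ RCLike.re S.trace :=
  (RCLike.nonneg_iff.1 hS.trace_nonneg).1

lemma IsHermitian.det_one_add {S : Matrix n n 𝕜} (hS : S.IsHermitian) :
    (1 + S).det = ∏ i, (1 + (hS.eigenvalues i : 𝕜)) := by
  set U := hS.eigenvectorUnitary
  have hUU : (star U : Matrix n n 𝕜) * U = 1 := Unitary.coe_star_mul_self U
  conv_lhs => rw [hS.spectral_theorem, ← map_one (Unitary.conjStarAlgAut 𝕜 _ U), ← map_add,
    Unitary.conjStarAlgAut_apply, det_mul_comm, ← Matrix.mul_assoc, hUU, Matrix.one_mul,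
    ← diagonal_one, diagonal_add, det_diagonal]
  simp

lemma IsHermitian.posSemidef_smul_one_sub {S : Matrix n n 𝕜} (hS : S.IsHermitian) {c : ℝ}
    (hc : ∀ i, hS.eigenvalues i ≤ c) : ((c : 𝕜) • 1 - S).PosSemidef := by
  set U := hS.eigenvectorUnitary
  have hD : (diagonal fun i => ((c - hS.eigenvalues i : ℝ) : 𝕜)).PosSemidef :=
    PosSemidef.diagonal fun i => by simpa using hc i
  convert hD.mul_mul_conjTranspose_same (U : Matrix n n 𝕜) using 1
  conv_lhs => rw [hS.spectral_theorem, ← map_one (Unitary.conjStarAlgAut 𝕜 _ U), ← map_smul,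
    ← map_sub, Unitary.conjStarAlgAut_apply, ← diagonal_one, ← diagonal_smul, diagonal_sub]
  simp [star_eq_conjTranspose]

lemma PosSemidef.posSemidef_re_trace_smul_one_sub {S : Matrix n n 𝕜} (hS : S.PosSemidef) :
    ((RCLike.re S.trace : 𝕜) • 1 - S).PosSemidef := by
  refine hS.1.posSemidef_smul_one_sub fun i => ?_
  rw [hS.1.trace_eq_sum_eigenvalues, ← RCLike.ofReal_sum, RCLike.ofReal_re]
  exact Finset.single_le_sum (fun j _ => hS.eigenvalues_nonneg j) (Finset.mem_univ i)

lemma PosSemidef.one_add_re_trace_le_re_det_one_add {S : Matrix n n 𝕜} (hS : S.PosSemidef) :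
    1 + RCLike.re S.trace ≤ RCLike.re (1 + S).det := by
  rw [hS.1.det_one_add, hS.1.trace_eq_sum_eigenvalues, ← RCLike.ofReal_sum]
  have hprod : ∏ i, (1 + (hS.1.eigenvalues i : 𝕜)) = ((∏ i, (1 + hS.1.eigenvalues i) : ℝ) : 𝕜) := by
    push_cast; rfl
  rw [hprod]
  simp only [RCLike.ofReal_re]
  exact Finset.one_add_sum_le_prod_one_add _ fun i _ => hS.eigenvalues_nonneg i

open scoped MatrixOrder in
lemma PosDef.exists_isUnit_conjTranspose_mul_mul_eq_one {B : Matrix n n 𝕜} (hB : B.PosDef) :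
    ∃ R : Matrix n n 𝕜, IsUnit R ∧ Rᴴ * B * R = 1 ∧ R * Rᴴ = B⁻¹ := by
  have hB0 : 0 ≤ B := hB.posSemidef.nonneg
  set Q := CFC.sqrt B
  have hQ : Qᴴ = Q := (CFC.sqrt_nonneg B).posSemidef.1
  have hQQ : Q * Q = B := CFC.sqrt_mul_sqrt_self B hB0
  have hQdet : IsUnit Q.det :=
    (isUnit_iff_isUnit_det Q).1 ((CFC.isUnit_sqrt_iff B hB0).2 hB.isUnit)
  refine ⟨Q⁻¹, isUnit_nonsing_inv_iff.2 ((isUnit_iff_isUnit_det Q).2 hQdet), ?_, ?_⟩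
  · rw [conjTranspose_nonsing_inv, hQ, ← hQQ, ← Matrix.mul_assoc, nonsing_inv_mul _ hQdet,
      Matrix.one_mul, mul_nonsing_inv _ hQdet]
  · rw [conjTranspose_nonsing_inv, hQ, ← Matrix.mul_inv_rev, hQQ]

variable {A B : Matrix n n 𝕜}

lemma PosSemidef.re_trace_inv_mul_nonneg (hA : A.PosSemidef) (hB : B.PosDef) :
    0 ≤ RCLike.re (B⁻¹ * A).trace := by
  obtain ⟨R, -, -, hRR⟩ := hB.exists_isUnit_conjTranspose_mul_mul_eq_one
  rw [← hRR, ← trace_mul_cycle]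
  exact (hA.conjTranspose_mul_mul_same R).re_trace_nonneg

lemma PosSemidef.posSemidef_re_trace_inv_mul_smul_sub (hA : A.PosSemidef) (hB : B.PosDef) :
    ((RCLike.re (B⁻¹ * A).trace : 𝕜) • B - A).PosSemidef := by
  obtain ⟨R, hR, hRBR, hRR⟩ := hB.exists_isUnit_conjTranspose_mul_mul_eq_one
  rw [← hR.posSemidef_star_left_conjugate_iff, star_eq_conjTranspose, Matrix.mul_sub,
    Matrix.sub_mul, Matrix.mul_smul, Matrix.smul_mul, hRBR, ← hRR, ← trace_mul_cycle]
  exact (hA.conjTranspose_mul_mul_same R).posSemidef_re_trace_smul_one_sub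

lemma PosSemidef.one_add_re_trace_inv_mul_le (hA : A.PosSemidef) (hB : B.PosDef) :
    1 + RCLike.re (B⁻¹ * A).trace ≤ RCLike.re (B⁻¹ * (A + B)).det := by
  obtain ⟨R, -, hRBR, hRR⟩ := hB.exists_isUnit_conjTranspose_mul_mul_eq_one
  have hdet : (B⁻¹ * (A + B)).det = (1 + Rᴴ * A * R).det := by
    rw [← hRBR, ← Matrix.add_mul, ← Matrix.mul_add, det_mul_comm _ R, ← Matrix.mul_assoc, hRR,
      add_comm]
  rw [hdet, ← hRR, ← trace_mul_cycle]
  exact (hA.conjTranspose_mul_mul_same R).one_add_re_trace_le_re_det_one_add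

lemma PosSemidef.re_trace_conjTranspose_mul_mul_same_le (hA : A.PosSemidef) (hB : B.PosDef)
    (V : Matrix n m 𝕜) :
    RCLike.re (Vᴴ * A * V).trace ≤ RCLike.re (B⁻¹ * A).trace * RCLike.re (Vᴴ * B * V).trace := by
  have h :=
    ((hA.posSemidef_re_trace_inv_mul_smul_sub hB).conjTranspose_mul_mul_same V).re_trace_nonneg
  rwa [Matrix.mul_sub, Matrix.sub_mul, Matrix.mul_smul, Matrix.smul_mul, trace_sub, trace_smul,
    map_sub, smul_eq_mul, RCLike.re_ofReal_mul, sub_nonneg] at h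

end Matrix

theorem stmt_6_general {K : ℕ} (N d : Fin K → ℕ)
    (A B : ∀ k, Matrix (Fin (N k)) (Fin (N k)) ℂ)
    (V : ∀ k, Matrix (Fin (N k)) (Fin (d k)) ℂ)
    (hA : ∀ k, (A k).PosSemidef) (hB : ∀ k, (B k).PosDef) :
    Real.logb 2 (1 +
        (∑ k, (((V k)ᴴ * A k * V k).trace).re) / (∑ k, (((V k)ᴴ * B k * V k).trace).re))
      ≤ ∑ k, Real.logb 2 ((((B k)⁻¹ * (A k + B k)).det).re) := by
  set a : Fin K → ℝ := fun k => ((V k)ᴴ * A k * V k).trace.re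
  set b : Fin K → ℝ := fun k => ((V k)ᴴ * B k * V k).trace.re
  set t : Fin K → ℝ := fun k => ((B k)⁻¹ * A k).trace.re
  have ha : ∀ k, 0 ≤ a k := fun k => ((hA k).conjTranspose_mul_mul_same (V k)).re_trace_nonneg
  have hb : ∀ k, 0 ≤ b k := fun k =>
    ((hB k).posSemidef.conjTranspose_mul_mul_same (V k)).re_trace_nonneg
  have ht : ∀ k, 0 ≤ t k := fun k => (hA k).re_trace_inv_mul_nonneg (hB k)
  have hratio : (∑ k, a k) / ∑ k, b k ≤ ∑ k, t k :=
    Finset.sum_div_sum_le_sum _ (fun k _ => hb k) (fun k _ => ht k)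
      (fun k _ => (hA k).re_trace_conjTranspose_mul_mul_same_le (hB k) (V k))
  have hpos : 0 < 1 + (∑ k, a k) / ∑ k, b k :=
    add_pos_of_pos_of_nonneg one_pos
      (div_nonneg (Finset.sum_nonneg fun k _ => ha k) (Finset.sum_nonneg fun k _ => hb k))
  calc _ ≤ Real.logb 2 (∏ k, (1 + t k)) := by
        refine Real.logb_le_logb_of_le one_lt_two hpos ?_
        linarith [Finset.one_add_sum_le_prod_one_add Finset.univ fun k _ => ht k]
    _ = ∑ k, Real.logb 2 (1 + t k) := Real.logb_prod _ _ fun k _ => by linarith [ht k]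
    _ ≤ _ := Finset.sum_le_sum fun k _ => Real.logb_le_logb_of_le one_lt_two (by linarith [ht k])
        ((hA k).one_add_re_trace_inv_mul_le (hB k))

/-- Theorem 1 (matrix form): with `A_k ⪰ 0`, `B_k ≻ 0`, `C_k = A_k + B_k` and
decoders `V_k` with orthonormal columns,
`log₂(1 + (∑ tr(VₖᴴA_kV_k)) / (∑ tr(VₖᴴB_kV_k))) ≤ ∑ log₂ det(B_k⁻¹ C_k)`. -/
theorem stmt_6 {K : ℕ} (hK : 0 < K) (N d : Fin K → ℕ) (hd : ∀ k, 0 < d k)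
    (A B : ∀ k, Matrix (Fin (N k)) (Fin (N k)) ℂ)
    (V : ∀ k, Matrix (Fin (N k)) (Fin (d k)) ℂ)
    (hA : ∀ k, (A k).PosSemidef) (hB : ∀ k, (B k).PosDef)
    (hV : ∀ k, (V k)ᴴ * V k = 1) :
    Real.logb 2 (1 +
        (∑ k, (((V k)ᴴ * A k * V k).trace).re) / (∑ k, (((V k)ᴴ * B k * V k).trace).re))
      ≤ ∑ k, Real.logb 2 ((((B k)⁻¹ * (A k + B k)).det).re) :=
  stmt_6_general N d A B V hA hB
end

section
/- (Theorem 2, stationarity transfer.) Let E be a real normed vector space, let n, d, h : E → ℝ be Fréchet differentiable at a point x*, with d(x*) > 0, and let λ ∈ ℝ. Set C = n(x*)/d(x*). If C · Dd(x*) − Dn(x*) − λ · Dh(x*) = 0 (as continuous linear functionals on E), then, with λ̃ = −λ/d(x*), the quotient n/d is differentiable at x* and D(n/d)(x*) − λ̃ · Dh(x*) = 0. Consequently any stationary point of the reformulated problem min C·d − n subject to h = 0 (with C chosen as the ratio value at that point) is a stationary point of the fractional problem max n/d subject to h = 0. -/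
theorem HasFDerivAt.div {𝕜 E : Type*} [NontriviallyNormedField 𝕜] [NormedAddCommGroup E]
    [NormedSpace 𝕜 E] {n d : E → 𝕜} {n' d' : E →L[𝕜] 𝕜} {x : E}
    (hn : HasFDerivAt n n' x) (hd : HasFDerivAt d d' x) (hx : d x ≠ 0) :
    HasFDerivAt (fun y => n y / d y) ((d x)⁻¹ • (n' - (n x / d x) • d')) x := by
  have hinv : HasFDerivAt (fun y => (d y)⁻¹) (-(d x ^ 2)⁻¹ • d') x :=
    (hasDerivAt_inv hx).comp_hasFDerivAt x hd
  simp_rw [div_eq_mul_inv]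
  refine (hn.mul hinv).congr_fderiv ?_
  ext v
  simp only [add_apply, smul_apply, sub_apply, smul_eq_mul]
  field_simp
  ring

theorem stmt_9_general {E : Type*} [NormedAddCommGroup E] [NormedSpace ℝ E]
    (n d : E → ℝ) (x : E) (n' d' h' : E →L[ℝ] ℝ)
    (hn : HasFDerivAt n n' x) (hd : HasFDerivAt d d' x)
    (hdpos : 0 < d x) (lam : ℝ)
    (hstat : (n x / d x) • d' - n' - lam • h' = 0) :
    HasFDerivAt (fun y => n y / d y) ((-lam / d x) • h') x := by
  have hgrad : n' - (n x / d x) • d' = -(lam • h') := by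
    linear_combination (norm := module) -hstat
  have hcoeff : (-lam / d x) • h' = (d x)⁻¹ • (n' - (n x / d x) • d') := by
    rw [hgrad]
    module
  exact hcoeff ▸ hn.div hd hdpos.ne'

/-- Theorem 2 (stationarity transfer): if `C·Dd(x*) − Dn(x*) − λ·Dh(x*) = 0`
with `C = n(x*)/d(x*)` and `d(x*) > 0`, then `n/d` is differentiable at `x*`
with derivative `λ̃ · Dh(x*)` where `λ̃ = −λ/d(x*)`, i.e.
`D(n/d)(x*) − λ̃·Dh(x*) = 0`. -/
theorem stmt_9 {E : Type*} [NormedAddCommGroup E] [NormedSpace ℝ E]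
    (n d h : E → ℝ) (x : E) (n' d' h' : E →L[ℝ] ℝ)
    (hn : HasFDerivAt n n' x) (hd : HasFDerivAt d d' x) (hh : HasFDerivAt h h' x)
    (hdpos : 0 < d x) (lam : ℝ)
    (hstat : (n x / d x) • d' - n' - lam • h' = 0) :
    HasFDerivAt (fun y => n y / d y) ((-lam / d x) • h') x :=
  stmt_9_general n d x n' d' h' hn hd hdpos lam hstat
end

section
/- (Theorem 3, indefinite case.) Let B̄₁ be an n×n Hermitian matrix over ℂ that is not positive semidefinite (i.e., it has a negative eigenvalue), let b̄ ∈ ℂⁿ, and let η > 0. Then every global minimizer p of g(p) = pᴴB̄₁p + b̄ᴴp + pᴴb̄ over the closed ball {p ∈ ℂⁿ : pᴴp ≤ η} satisfies pᴴp = η. Consequently the minimum of g over the ball {pᴴp ≤ η} equals the minimum of g over the sphere {pᴴp = η}. -/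
/-!
If a minimizer `p` lay strictly inside the ball, take `v` with `vᴴB̄₁v < 0`. The linear terms of `g`
cancel in the second difference, `g(p + tv) + g(p - tv) = 2 g(p) + 2t² vᴴB̄₁v < 2 g(p)`, so for
small `t ≠ 0` one of the two feasible points `p ± tv` beats `p`.
-/

open Matrix Filter Topology
open scoped ComplexOrder

namespace Matrix

variable {ι R : Type*} [Fintype ι]

lemma IsHermitian.exists_re_dotProduct_mulVec_neg {𝕜 : Type*} [RCLike 𝕜] {A : Matrix ι ι 𝕜}
    (hA : A.IsHermitian) (hnot : ¬ A.PosSemidef) :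
    ∃ v : ι → 𝕜, RCLike.re (star v ⬝ᵥ A *ᵥ v) < 0 := by
  by_contra! h
  exact hnot <| .of_dotProduct_mulVec_nonneg hA fun v =>
    RCLike.nonneg_iff.2 ⟨h v, hA.im_star_dotProduct_mulVec_self v⟩

def quadraticObjective [Ring R] [StarRing R] (A : Matrix ι ι R) (b q : ι → R) : R :=
  star q ⬝ᵥ A *ᵥ q + star b ⬝ᵥ q + star q ⬝ᵥ b

lemma quadraticObjective_add_add_sub [Ring R] [StarRing R] (A : Matrix ι ι R) (b p w : ι → R) :
    quadraticObjective A b (p + w) + quadraticObjective A b (p - w) =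
      2 * quadraticObjective A b p + 2 * (star w ⬝ᵥ A *ᵥ w) := by
  simp only [quadraticObjective, star_add, star_sub, mulVec_add, mulVec_sub, dotProduct_add,
    dotProduct_sub, add_dotProduct, sub_dotProduct, two_mul]
  abel

end Matrix

lemma IsLocalMin.eventually_two_mul_le_add_add_sub {E : Type*} [AddCommGroup E] [Module ℝ E]
    [TopologicalSpace E] [IsTopologicalAddGroup E] [ContinuousSMul ℝ E] {f : E → ℝ} {p : E}
    (hf : IsLocalMin f p) (v : E) :
    ∀ᶠ t : ℝ in 𝓝 0, 2 * f p ≤ f (p + t • v) + f (p - t • v) := by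
  have hadd : Tendsto (fun t : ℝ => p + t • v) (𝓝 0) (𝓝 p) :=
    (by fun_prop : Continuous fun t : ℝ => p + t • v).tendsto' 0 p (by simp)
  have hsub : Tendsto (fun t : ℝ => p - t • v) (𝓝 0) (𝓝 p) :=
    (by fun_prop : Continuous fun t : ℝ => p - t • v).tendsto' 0 p (by simp)
  filter_upwards [hadd.eventually hf, hsub.eventually hf] with t h₁ h₂
  linarith

theorem stmt_11_general {n : ℕ} (B₁ : Matrix (Fin n) (Fin n) ℂ) (hB₁ : B₁.IsHermitian)
    (hneg : ¬ B₁.PosSemidef) (b : Fin n → ℂ) (η : ℝ)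
    (g : (Fin n → ℂ) → ℝ)
    (hg : ∀ p, g p = ((star p ⬝ᵥ B₁.mulVec p) + (star b ⬝ᵥ p) + (star p ⬝ᵥ b)).re)
    (p : Fin n → ℂ)
    (hfeas : (star p ⬝ᵥ p).re ≤ η)
    (hmin : ∀ q, (star q ⬝ᵥ q).re ≤ η → g p ≤ g q) :
    (star p ⬝ᵥ p).re = η ∧ ∀ q, (star q ⬝ᵥ q).re = η → g p ≤ g q := by
  obtain rfl : g = fun q => (quadraticObjective B₁ b q).re := funext hg
  refine ⟨?_, fun q hq => hmin q hq.le⟩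
  by_contra hne
  have hinterior : ∀ᶠ q in 𝓝 p, (star q ⬝ᵥ q).re ≤ η :=
    ((by fun_prop : Continuous fun q : Fin n → ℂ => (star q ⬝ᵥ q).re).continuousAt.eventually_lt
      continuousAt_const (hfeas.lt_of_ne hne)).mono fun _ => le_of_lt
  have hloc : IsLocalMin (fun q => (quadraticObjective B₁ b q).re) p :=
    IsMinOn.isLocalMin (fun q hq => hmin q hq) hinterior
  obtain ⟨v, hv⟩ := hB₁.exists_re_dotProduct_mulVec_neg hneg
  rw [RCLike.re_to_complex] at hv
  obtain ⟨t, hle, ht⟩ : ∃ t : ℝ, 2 * (quadraticObjective B₁ b p).re ≤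
      (quadraticObjective B₁ b (p + t • v)).re + (quadraticObjective B₁ b (p - t • v)).re ∧ t ≠ 0 :=
    (((hloc.eventually_two_mul_le_add_add_sub v).filter_mono nhdsWithin_le_nhds).and
      self_mem_nhdsWithin).exists (f := 𝓝[≠] 0)
  have hsecond : (quadraticObjective B₁ b (p + t • v)).re + (quadraticObjective B₁ b (p - t • v)).re
      = 2 * (quadraticObjective B₁ b p).re + 2 * t ^ 2 * (star v ⬝ᵥ B₁ *ᵥ v).re := by
    rw [← Complex.add_re, quadraticObjective_add_add_sub]
    simp only [star_smul, star_trivial, mulVec_smul, dotProduct_smul, smul_dotProduct,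
      Complex.real_smul, Complex.add_re, Complex.mul_re, Complex.re_ofNat, Complex.im_ofNat,
      zero_mul, sub_zero, Complex.ofReal_re, Complex.ofReal_im, Complex.mul_im, add_zero,
      add_right_inj]
    ring
  have ht2 : 0 < t ^ 2 := by positivity
  nlinarith

/-- Theorem 3 (indefinite case): if the Hermitian matrix `B̄₁` is not positive
semidefinite, every global minimizer of `g` over the ball `{p : pᴴp ≤ η}` lies
on the sphere `pᴴp = η`, and hence also minimizes `g` over the sphere. -/
theorem stmt_11 {n : ℕ} (B₁ : Matrix (Fin n) (Fin n) ℂ) (hB₁ : B₁.IsHermitian)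
    (hneg : ¬ B₁.PosSemidef) (b : Fin n → ℂ) (η : ℝ) (hη : 0 < η)
    (g : (Fin n → ℂ) → ℝ)
    (hg : ∀ p, g p = ((star p ⬝ᵥ B₁.mulVec p) + (star b ⬝ᵥ p) + (star p ⬝ᵥ b)).re)
    (p : Fin n → ℂ)
    (hfeas : (star p ⬝ᵥ p).re ≤ η)
    (hmin : ∀ q, (star q ⬝ᵥ q).re ≤ η → g p ≤ g q) :
    (star p ⬝ᵥ p).re = η ∧ ∀ q, (star q ⬝ᵥ q).re = η → g p ≤ g q :=
  stmt_11_general B₁ hB₁ hneg b η g hg p hfeas hmin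
end

section
/- (Theorem 4 / rank-one precoder.) Let Q be an M×M Hermitian matrix over ℂ, L an M×M Hermitian positive semidefinite matrix, p > 0 and η ≥ 0 real numbers, and d ≥ 1. Suppose the feasible set S = {X ∈ ℂ^{M×d} : tr(XᴴX) = p and tr(XᴴLX) = η} is nonempty. Then the problem min_{X ∈ S} tr(XᴴQX) has a global minimizer X* of rank one, i.e., there exists X* ∈ S with rank(X*) = 1 such that tr(X*ᴴQX*) ≤ tr(XᴴQX) for all X ∈ S. -/
/-!
The numerical range `{⟪x, T x⟫ : ‖x‖ = 1}` of an operator on a complex inner product space is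
convex (Toeplitz–Hausdorff): after an affine change of `T` it suffices to reach every `t ∈ [0, 1]`
from unit vectors with values `0` and `1`; rotating the second one by a unimodular scalar makes the
cross term real, so the form is real along the segment between them and the intermediate value
theorem applies.

For a feasible `X`, `tr (Xᴴ (L + i Q) X) / p` is a convex combination of the values of `L + i Q` at
the normalized columns of `X`, so it is attained at a unit vector `u`, and then `uᴴ L u = η / p`
and `uᴴ Q u = tr (Xᴴ Q X) / p`. Minimizing `uᴴ Q u` over the compact set of unit vectors with
`uᴴ L u = η / p` and taking `X⋆ = √p · u eᵀ`, with `e` a standard basis vector, gives a rank-one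
global minimizer.
-/

open Matrix Set WithLp
open scoped InnerProductSpace ComplexConjugate ComplexOrder

lemma Complex.exists_norm_eq_one_im_mul_eq_zero (δ : ℂ) : ∃ c : ℂ, ‖c‖ = 1 ∧ (c * δ).im = 0 := by
  refine ⟨Complex.exp (-(δ.arg : ℂ) * Complex.I),
    by simpa using Complex.norm_exp_ofReal_mul_I (-δ.arg), ?_⟩
  conv_lhs => rw [← Complex.norm_mul_exp_arg_mul_I δ]
  rw [mul_left_comm, ← Complex.exp_add]
  simp

namespace LinearMap

variable {E : Type*} [NormedAddCommGroup E] [InnerProductSpace ℂ E]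

def numericalRange (T : E →ₗ[ℂ] E) : Set ℂ := {z | ∃ x, ‖x‖ = 1 ∧ ⟪x, T x⟫_ℂ = z}

variable (T : E →ₗ[ℂ] E)

lemma inner_smul_map_smul (c : ℂ) (x : E) :
    ⟪c • x, T (c • x)⟫_ℂ = (‖c‖ ^ 2 : ℂ) * ⟪x, T x⟫_ℂ := by
  rw [map_smul, inner_smul_left, inner_smul_right, ← mul_assoc, Complex.conj_mul']

lemma inv_norm_sq_mul_inner_mem_numericalRange {x : E} (hx : x ≠ 0) :
    ((‖x‖ ^ 2)⁻¹ : ℂ) * ⟪x, T x⟫_ℂ ∈ T.numericalRange :=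
  ⟨(‖x‖⁻¹ : ℂ) • x, by simp [norm_smul, hx], by rw [inner_smul_map_smul]; simp [inv_pow]⟩

lemma ofReal_mem_numericalRange_of_im_cross_eq_zero {x y : E} (hx : x ≠ 0) (hy : ‖y‖ = 1)
    (hTx : ⟪x, T x⟫_ℂ = 0) (hTy : ⟪y, T y⟫_ℂ = 1) (hcross : (⟪x, T y⟫_ℂ + ⟪y, T x⟫_ℂ).im = 0)
    {t : ℝ} (ht : t ∈ Icc (0 : ℝ) 1) : (t : ℂ) ∈ T.numericalRange := by
  set g := (⟪x, T y⟫_ℂ + ⟪y, T x⟫_ℂ).re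
  have hg : ⟪x, T y⟫_ℂ + ⟪y, T x⟫_ℂ = g := Complex.ext rfl (by simpa using hcross)
  set z : ℝ → E := fun r => ((1 - r : ℝ) : ℂ) • x + (r : ℂ) • y
  have hz_inner (r : ℝ) : ⟪z r, T (z r)⟫_ℂ = ((r * (1 - r) * g + r ^ 2 : ℝ) : ℂ) := by
    simp only [z, map_add, map_smul, inner_add_left, inner_add_right, inner_smul_left,
      inner_smul_right, Complex.conj_ofReal, hTx, hTy]
    push_cast
    linear_combination (r * (1 - r) : ℂ) * hg
  have hz_ne (r : ℝ) : z r ≠ 0 := by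
    intro h0
    have hxy : ((1 - r : ℝ) : ℂ) • x = ((-r : ℝ) : ℂ) • y := by
      rw [Complex.ofReal_neg, neg_smul]; exact eq_neg_of_add_eq_zero_left h0
    have hr : r = 0 := by
      have := congrArg (fun w => ⟪w, T w⟫_ℂ) hxy
      simp only [inner_smul_map_smul, hTx, hTy, mul_zero, mul_one] at this
      norm_cast at this
      simpa using this.symm
    exact hx (by simpa [z, hr] using h0)
  set f : ℝ → ℝ := fun r => (r * (1 - r) * g + r ^ 2) / ‖z r‖ ^ 2
  have hf : Continuous f :=
    Continuous.div (by fun_prop) (by fun_prop) fun r => by simpa using hz_ne r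
  obtain ⟨r, -, hfr⟩ := intermediate_value_Icc zero_le_one hf.continuousOn
    (by simpa [f, z, hy] using ht)
  convert T.inv_norm_sq_mul_inner_mem_numericalRange (hz_ne r) using 1
  rw [hz_inner, ← hfr]
  push_cast [f]
  ring

lemma ofReal_mem_numericalRange {x y : E} (hx : ‖x‖ = 1) (hy : ‖y‖ = 1)
    (hTx : ⟪x, T x⟫_ℂ = 0) (hTy : ⟪y, T y⟫_ℂ = 1) {t : ℝ} (ht : t ∈ Icc (0 : ℝ) 1) :
    (t : ℂ) ∈ T.numericalRange := by
  -- rotating `y` by a unimodular `c` makes the cross term `⟪x, T y⟫ + ⟪y, T x⟫` real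
  obtain ⟨c, hc, hcδ⟩ := Complex.exists_norm_eq_one_im_mul_eq_zero (⟪x, T y⟫_ℂ - conj ⟪y, T x⟫_ℂ)
  refine T.ofReal_mem_numericalRange_of_im_cross_eq_zero (y := c • y)
    (norm_ne_zero_iff.mp (by simp [hx])) (by simp [norm_smul, hc, hy]) hTx
    (by rw [inner_smul_map_smul, hc, hTy]; simp) ?_ ht
  simp only [map_smul, inner_smul_left, inner_smul_right, Complex.add_im, Complex.mul_im,
    Complex.sub_im, Complex.sub_re, Complex.conj_re, Complex.conj_im] at hcδ ⊢
  linarith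

theorem convex_numericalRange : Convex ℝ T.numericalRange := by
  rintro _ ⟨x, hx, rfl⟩ _ ⟨y, hy, rfl⟩ s t hs ht hst
  set P := ⟪x, T x⟫_ℂ
  set R := ⟪y, T y⟫_ℂ
  by_cases hPR : P = R
  · refine ⟨x, hx, ?_⟩
    rw [← hPR, ← add_smul, hst, one_smul]
  have hRP : R - P ≠ 0 := sub_ne_zero.mpr (Ne.symm hPR)
  set S := (R - P)⁻¹ • (T - P • LinearMap.id)
  have hS (u : E) (hu : ‖u‖ = 1) : ⟪u, S u⟫_ℂ = (R - P)⁻¹ * (⟪u, T u⟫_ℂ - P) := by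
    simp [S, inner_self_eq_norm_sq_to_K, hu]
  obtain ⟨u, hu, hSu⟩ := S.ofReal_mem_numericalRange hx hy (by rw [hS x hx, sub_self, mul_zero])
    (by rw [hS y hy]; exact inv_mul_cancel₀ hRP) ⟨ht, by linarith⟩
  refine ⟨u, hu, ?_⟩
  rw [hS u hu] at hSu
  rw [Complex.real_smul, Complex.real_smul, (by linarith : s = 1 - t)]
  field_simp at hSu
  push_cast
  linear_combination hSu

lemma inv_sum_norm_sq_mul_sum_inner_mem_numericalRange {ι : Type*} [Fintype ι] (x : ι → E)
    (hx : ∑ i, ‖x i‖ ^ 2 ≠ 0) :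
    ((∑ i, ‖x i‖ ^ 2 : ℝ)⁻¹ : ℂ) * ∑ i, ⟪x i, T (x i)⟫_ℂ ∈ T.numericalRange := by
  set N := ∑ i, ‖x i‖ ^ 2
  have hw : ∑ᶠ i, ‖x i‖ ^ 2 / N = 1 := by
    rw [finsum_eq_sum_of_fintype, ← Finset.sum_div, div_self hx]
  have hmem := (T.convex_numericalRange).finsum_mem (fun i => by positivity) hw
    (z := fun i => ((‖x i‖ ^ 2)⁻¹ : ℂ) * ⟪x i, T (x i)⟫_ℂ)
    fun i hi => T.inv_norm_sq_mul_inner_mem_numericalRange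
      (by simpa using (div_ne_zero_iff.mp hi).1)
  convert hmem using 1
  rw [finsum_eq_sum_of_fintype, Finset.mul_sum]
  refine Finset.sum_congr rfl fun i _ => ?_
  by_cases hi : x i = 0
  · simp [hi]
  · rw [Complex.real_smul]
    push_cast
    field_simp

lemma isCompact_setOf_norm_eq_one_inner_eq [FiniteDimensional ℂ E] (z : ℂ) :
    IsCompact {x : E | ‖x‖ = 1 ∧ ⟪x, T x⟫_ℂ = z} := by
  have := T.continuous_of_finiteDimensional
  refine (isCompact_sphere (0 : E) 1).of_isClosed_subset ?_ fun x hx => by simpa using hx.1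
  exact (isClosed_eq (by fun_prop) continuous_const).inter
    (isClosed_eq (by fun_prop) continuous_const)

lemma exists_isMinOn_re_inner [FiniteDimensional ℂ E] (S : E →ₗ[ℂ] E) {z : ℂ}
    (hz : ∃ x : E, ‖x‖ = 1 ∧ ⟪x, T x⟫_ℂ = z) :
    ∃ u ∈ {x : E | ‖x‖ = 1 ∧ ⟪x, T x⟫_ℂ = z},
      IsMinOn (fun x => (⟪x, S x⟫_ℂ).re) {x : E | ‖x‖ = 1 ∧ ⟪x, T x⟫_ℂ = z} u := by
  have := S.continuous_of_finiteDimensional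
  exact (T.isCompact_setOf_norm_eq_one_inner_eq z).exists_isMinOn hz (by fun_prop)

end LinearMap

namespace Matrix

lemma rank_vecMulVec_eq_one {m k K : Type*} [Fintype k] [DecidableEq k] [Field K] {w : m → K}
    {v : k → K} (hw : w ≠ 0) (hv : v ≠ 0) : (vecMulVec w v).rank = 1 := by
  obtain ⟨i, hi⟩ := Function.ne_iff.mp hw
  obtain ⟨j, hj⟩ := Function.ne_iff.mp hv
  have hne : vecMulVec w v ≠ 0 := fun h => mul_ne_zero hi hj congr($h i j)
  refine le_antisymm (rank_vecMulVec_le w v) (Nat.one_le_iff_ne_zero.mpr ?_)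
  rw [rank, Ne, Submodule.finrank_eq_zero, LinearMap.range_eq_bot, ← toLin'_apply']
  simpa using hne

variable {m k : Type*} [Fintype m] [DecidableEq m] [Fintype k]

lemma trace_conjTranspose_mul_mul (A : Matrix m m ℂ) (X : Matrix m k ℂ) :
    (Xᴴ * A * X).trace = ∑ j, ⟪toLp 2 (Xᵀ j), toEuclideanLin A (toLp 2 (Xᵀ j))⟫_ℂ := by
  simp only [trace, diag_apply, mul_apply, conjTranspose_apply, toLpLin_toLp, toLin'_apply,
    EuclideanSpace.inner_toLp_toLp, dotProduct, mulVec, transpose_apply, Pi.star_apply,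
    RCLike.star_def, Finset.sum_mul]
  refine Finset.sum_congr rfl fun j _ => ?_
  rw [Finset.sum_comm]
  refine Finset.sum_congr rfl fun i _ => Finset.sum_congr rfl fun l _ => ?_
  ring

lemma trace_conjTranspose_mul_self (X : Matrix m k ℂ) :
    (Xᴴ * X).trace = ∑ j, ((‖toLp 2 (Xᵀ j)‖ ^ 2 : ℝ) : ℂ) := by
  simpa [inner_self_eq_norm_sq_to_K] using trace_conjTranspose_mul_mul 1 X

lemma im_trace_conjTranspose_mul_mul {A : Matrix m m ℂ} (hA : A.IsHermitian)
    (X : Matrix m k ℂ) : (Xᴴ * A * X).trace.im = 0 := by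
  rw [trace_conjTranspose_mul_mul, Complex.im_sum]
  exact Finset.sum_eq_zero fun j _ =>
    (isSymmetric_toEuclideanLin_iff.mpr hA).im_inner_self_apply _

lemma coe_re_trace_conjTranspose_mul_mul {A : Matrix m m ℂ} (hA : A.IsHermitian)
    (X : Matrix m k ℂ) : ((Xᴴ * A * X).trace.re : ℂ) = (Xᴴ * A * X).trace :=
  Complex.ext rfl (by simp [im_trace_conjTranspose_mul_mul hA X])

lemma trace_conjTranspose_vecMulVec_mul_mul (A : Matrix m m ℂ) (w : EuclideanSpace ℂ m)
    (v : EuclideanSpace ℂ k) :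
    ((vecMulVec (ofLp w) (ofLp v))ᴴ * A * vecMulVec (ofLp w) (ofLp v)).trace
      = (‖v‖ ^ 2 : ℂ) * ⟪w, toEuclideanLin A w⟫_ℂ := by
  have hcol (j : k) : toLp 2 ((vecMulVec (ofLp w) (ofLp v))ᵀ j) = v j • w := by
    ext i
    simp [vecMulVec_apply, mul_comm]
  simp_rw [trace_conjTranspose_mul_mul, hcol, LinearMap.inner_smul_map_smul]
  rw [← Finset.sum_mul]
  congr 1
  exact_mod_cast (EuclideanSpace.norm_sq_eq v).symm

theorem exists_norm_eq_one_inner_eq_trace_div {L Q : Matrix m m ℂ} (hL : L.IsHermitian)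
    (hQ : Q.IsHermitian) {X : Matrix m k ℂ} {p : ℝ} (hp : p ≠ 0) (hX : (Xᴴ * X).trace = p) :
    ∃ u : EuclideanSpace ℂ m, ‖u‖ = 1 ∧
      ⟪u, toEuclideanLin L u⟫_ℂ = (Xᴴ * L * X).trace / p ∧
      ⟪u, toEuclideanLin Q u⟫_ℂ = (Xᴴ * Q * X).trace / p := by
  have hsum : ∑ j, ‖toLp 2 (Xᵀ j)‖ ^ 2 = p := by
    exact_mod_cast (trace_conjTranspose_mul_self X).symm.trans hX
  -- the Hermitian and skew-Hermitian parts of `L + I • Q` carry the two quadratic forms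
  obtain ⟨u, hu, hLQ⟩ :=
    (toEuclideanLin (L + Complex.I • Q)).inv_sum_norm_sq_mul_sum_inner_mem_numericalRange
      (fun j => toLp 2 (Xᵀ j)) (by rw [hsum]; exact hp)
  rw [hsum, ← trace_conjTranspose_mul_mul, Matrix.mul_add, Matrix.add_mul, trace_add,
    Matrix.mul_smul, Matrix.smul_mul, trace_smul, map_add, map_smul, LinearMap.add_apply,
    LinearMap.smul_apply, inner_add_right, inner_smul_right] at hLQ
  have hsymm {A : Matrix m m ℂ} (hA : A.IsHermitian) :=
    (isSymmetric_toEuclideanLin_iff.mpr hA).coe_re_inner_self_apply u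
  refine ⟨u, hu, ?_⟩
  rw [← hsymm hL, ← hsymm hQ, ← coe_re_trace_conjTranspose_mul_mul hL,
    ← coe_re_trace_conjTranspose_mul_mul hQ] at hLQ ⊢
  rw [div_eq_inv_mul, div_eq_inv_mul, ← Complex.ofReal_inv, ← Complex.ofReal_mul,
    ← Complex.ofReal_mul]
  obtain ⟨hre, him⟩ := Complex.ext_iff.mp hLQ
  exact ⟨congrArg Complex.ofReal (by simpa using hre),
    congrArg Complex.ofReal (by simpa using him)⟩

lemma exists_rank_eq_one_trace_conjTranspose_mul_mul [DecidableEq k] [Nonempty k]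
    {u : EuclideanSpace ℂ m} (hu : ‖u‖ = 1) {p : ℝ} (hp : 0 < p) :
    ∃ X : Matrix m k ℂ, X.rank = 1 ∧
      ∀ A : Matrix m m ℂ, (Xᴴ * A * X).trace = p * ⟪u, toEuclideanLin A u⟫_ℂ := by
  have hu₀ : u ≠ 0 := by rintro rfl; simp at hu
  refine ⟨vecMulVec (ofLp ((Real.sqrt p : ℂ) • u))
    (ofLp (EuclideanSpace.single (Classical.arbitrary k) 1)), rank_vecMulVec_eq_one ?_ (by simp),
    fun A => ?_⟩
  · simpa [Real.sqrt_ne_zero', hp] using hu₀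
  · rw [trace_conjTranspose_vecMulVec_mul_mul, LinearMap.inner_smul_map_smul]
    simp [← Complex.ofReal_pow, Real.sq_sqrt hp.le]

end Matrix

theorem stmt_13_general {M d : ℕ} (hd : 1 ≤ d) (Q L : Matrix (Fin M) (Fin M) ℂ)
    (hQ : Q.IsHermitian) (hL : L.PosSemidef) (p η : ℝ) (hp : 0 < p)
    (hne : ∃ X : Matrix (Fin M) (Fin d) ℂ,
      (Xᴴ * X).trace = (p : ℂ) ∧ (Xᴴ * L * X).trace = (η : ℂ)) :
    ∃ Xstar : Matrix (Fin M) (Fin d) ℂ,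
      (Xstarᴴ * Xstar).trace = (p : ℂ) ∧ (Xstarᴴ * L * Xstar).trace = (η : ℂ) ∧
      Xstar.rank = 1 ∧
      ∀ X : Matrix (Fin M) (Fin d) ℂ,
        (Xᴴ * X).trace = (p : ℂ) → (Xᴴ * L * X).trace = (η : ℂ) →
        ((Xstarᴴ * Q * Xstar).trace).re ≤ ((Xᴴ * Q * X).trace).re := by
  set K := {u : EuclideanSpace ℂ (Fin M) | ‖u‖ = 1 ∧ ⟪u, toEuclideanLin L u⟫_ℂ = η / p}
  have hK (X : Matrix (Fin M) (Fin d) ℂ) (hXp : (Xᴴ * X).trace = p)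
      (hXη : (Xᴴ * L * X).trace = η) :
      ∃ u ∈ K, ⟪u, toEuclideanLin Q u⟫_ℂ = (Xᴴ * Q * X).trace / p := by
    obtain ⟨u, hu, huL, huQ⟩ := exists_norm_eq_one_inner_eq_trace_div hL.1 hQ hp.ne' hXp
    exact ⟨u, ⟨hu, hXη ▸ huL⟩, huQ⟩
  obtain ⟨X₀, hX₀p, hX₀η⟩ := hne
  obtain ⟨u₀, hu₀, -⟩ := hK X₀ hX₀p hX₀η
  obtain ⟨u, ⟨hu, huL⟩, hmin⟩ :=
    (toEuclideanLin L).exists_isMinOn_re_inner (toEuclideanLin Q) ⟨u₀, hu₀⟩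
  have : Nonempty (Fin d) := ⟨⟨0, hd⟩⟩
  obtain ⟨Xstar, hrank, htr⟩ := exists_rank_eq_one_trace_conjTranspose_mul_mul (k := Fin d) hu hp
  refine ⟨Xstar, ?_, by rw [htr, huL, mul_div_cancel₀ _ (by exact_mod_cast hp.ne')], hrank,
    fun X hXp hXη => ?_⟩
  · rw [← Matrix.mul_one Xstarᴴ, htr, toLpLin_one]
    simp [inner_self_eq_norm_sq_to_K, hu]
  · obtain ⟨u', hu', hu'Q⟩ := hK X hXp hXη
    have hle := hmin hu'
    simp only [mem_ofPred_eq, hu'Q, Complex.div_ofReal_re] at hle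
    rw [htr, Complex.re_ofReal_mul]
    exact (le_div_iff₀' hp).mp hle

/-- Theorem 3 / rank-one precoder: the problem `min tr(XᴴQX)` subject to
`tr(XᴴX) = p` and `tr(XᴴLX) = η` (nonempty feasible set) always has a global
minimizer of rank one. -/
theorem stmt_13 {M d : ℕ} (hd : 1 ≤ d) (Q L : Matrix (Fin M) (Fin M) ℂ)
    (hQ : Q.IsHermitian) (hL : L.PosSemidef) (p η : ℝ) (hp : 0 < p) (hη : 0 ≤ η)
    (hne : ∃ X : Matrix (Fin M) (Fin d) ℂ,
      (Xᴴ * X).trace = (p : ℂ) ∧ (Xᴴ * L * X).trace = (η : ℂ)) :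
    ∃ Xstar : Matrix (Fin M) (Fin d) ℂ,
      (Xstarᴴ * Xstar).trace = (p : ℂ) ∧ (Xstarᴴ * L * Xstar).trace = (η : ℂ) ∧
      Xstar.rank = 1 ∧
      ∀ X : Matrix (Fin M) (Fin d) ℂ,
        (Xᴴ * X).trace = (p : ℂ) → (Xᴴ * L * X).trace = (η : ℂ) →
        ((Xstarᴴ * Q * Xstar).trace).re ≤ ((Xᴴ * Q * X).trace).re :=
  stmt_13_general hd Q L hQ hL p η hp hne
end

section
/- (Theorem on rank-one power allocation.) Let Q be an M×M Hermitian matrix over ℂ, L an M×M Hermitian positive semidefinite matrix, p > 0 and η ≥ 0 real numbers, and d ≥ 1. Consider the feasible set F = {(X, Φ) : X ∈ ℂ^{M×d}, Φ ∈ ℂ^{d×d} diagonal with nonnegative real diagonal entries, XᴴX = Φ, tr(Φ) ≤ p, tr(XᴴLX) ≤ η}, which is nonempty (it contains (0,0)). Then the problem min_{(X,Φ) ∈ F} tr(XᴴQX) has a global minimizer (X*, Φ*) in which Φ* has at most one nonzero diagonal entry; i.e., the optimal per-stream power allocation assigns the entire used transmit power to a single data stream, so rank(Φ*) ≤ 1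 and hence rank(X*) ≤ 1. -/
open Matrix
open scoped ComplexOrder

/-!
A feasible `X` has orthogonal columns `xₖ`. Combining them into `z = ∑ ωₖ xₖ` with unimodular
`ωₖ`, chosen one at a time so that the new cross terms of both Hermitian forms `zᴴLz` and `zᴴQz`
have nonpositive real part, gives a vector with `‖z‖² = ∑ |ωₖ|² Φₖₖ = tr Φ`, `zᴴLz ≤ tr(XᴴLX)` and
`zᴴQz ≤ tr(XᴴQX)`. Hence a minimizer `x` of `xᴴQx` over the compact set
`{‖x‖² ≤ p, xᴴLx ≤ η}`, placed in a single column, minimizes the matrix problem.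
-/

namespace Complex

lemma exists_norm_eq_one_re_mul_eq_zero (a : ℂ) : ∃ u : ℂ, ‖u‖ = 1 ∧ (u * a).re = 0 := by
  refine ⟨exp ((Real.pi / 2 - arg a : ℝ) * I), norm_exp_ofReal_mul_I _, ?_⟩
  conv_lhs => rw [← norm_mul_exp_arg_mul_I a]
  rw [mul_left_comm, ← exp_add, ← add_mul, ← ofReal_add]
  simp

/-- False over `ℝ`, where the only phases are `±1`: this is where complex precoders are needed. -/
lemma exists_norm_eq_one_re_mul_nonpos (a b : ℂ) :
    ∃ ω : ℂ, ‖ω‖ = 1 ∧ (ω * a).re ≤ 0 ∧ (ω * b).re ≤ 0 := by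
  obtain ⟨u, hu, hua⟩ := exists_norm_eq_one_re_mul_eq_zero a
  rcases le_total (u * b).re 0 with hub | hub
  · exact ⟨u, hu, hua.le, hub⟩
  · exact ⟨-u, by rwa [norm_neg], by simp [hua], by simpa using hub⟩

end Complex

namespace Matrix

section Semiring

variable {m n ι α : Type*} [CommSemiring α]

lemma IsHermitian.star_dotProduct_mulVec [StarRing α] [Fintype n] {A : Matrix n n α}
    (hA : A.IsHermitian) (z w : n → α) : star w ⬝ᵥ A *ᵥ z = star (star z ⬝ᵥ A *ᵥ w) := by
  rw [star_dotProduct, star_mulVec, ← dotProduct_mulVec, hA.eq]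

lemma star_mulVec_dotProduct_mulVec_mulVec [StarRing α] [Fintype m] [Fintype n] (A : Matrix n n α)
    (X : Matrix n m α) (v : m → α) :
    star (X *ᵥ v) ⬝ᵥ A *ᵥ (X *ᵥ v) = star v ⬝ᵥ (Xᴴ * A * X) *ᵥ v := by
  rw [star_mulVec, mulVec_mulVec, dotProduct_mulVec, dotProduct_mulVec, vecMul_vecMul,
    Matrix.mul_assoc]

lemma mulVec_eq_sum_smul_col [Fintype ι] (X : Matrix n ι α) (ω : ι → α) :
    X *ᵥ ω = ∑ k, ω k • X.col k := by
  simp [mulVec_eq_sum, col]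

lemma conjTranspose_vecMulVec_single_mul_mul [StarRing α] [Fintype n] [DecidableEq ι]
    (A : Matrix n n α) (x : n → α) (j : ι) :
    (vecMulVec x (Pi.single j 1))ᴴ * A * vecMulVec x (Pi.single j 1) =
      single j j (star x ⬝ᵥ A *ᵥ x) := by
  rw [conjTranspose_vecMulVec, vecMulVec_mul, vecMulVec_mul_vecMulVec, ← dotProduct_mulVec]
  ext a b
  by_cases ha : j = a <;> by_cases hb : j = b <;>
    simp [vecMulVec_apply, single_apply, Pi.single_apply, ha, hb, eq_comm]

end Semiring

variable {n ι : Type*} [Fintype n]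

def quadFormRe (A : Matrix n n ℂ) (x : n → ℂ) : ℝ := (star x ⬝ᵥ A *ᵥ x).re

lemma continuous_quadFormRe (A : Matrix n n ℂ) : Continuous A.quadFormRe := by
  unfold quadFormRe; fun_prop

lemma quadFormRe_one [DecidableEq n] (x : n → ℂ) : quadFormRe 1 x = ∑ i, ‖x i‖ ^ 2 := by
  rw [quadFormRe, one_mulVec, dotProduct, Complex.re_sum]
  refine Finset.sum_congr rfl fun i _ => ?_
  rw [Pi.star_apply, Complex.star_def, Complex.conj_mul']
  norm_cast

lemma quadFormRe_add_smul {A : Matrix n n ℂ} (hA : A.IsHermitian) (z w : n → ℂ) {ω : ℂ}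
    (hω : ‖ω‖ = 1) :
    A.quadFormRe (z + ω • w) =
      A.quadFormRe z + A.quadFormRe w + 2 * (ω * (star z ⬝ᵥ A *ᵥ w)).re := by
  have hωω : ω * star ω = 1 := by simp [Complex.mul_conj', hω]
  simp only [quadFormRe, star_add, star_smul, mulVec_add, mulVec_smul, add_dotProduct,
    dotProduct_add, smul_dotProduct, dotProduct_smul, smul_eq_mul, hA.star_dotProduct_mulVec z w]
  rw [mul_add, ← mul_assoc ω, hωω, one_mul, ← star_mul']
  simp only [Complex.add_re, Complex.star_def, Complex.conj_re]
  ring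

lemma exists_quadFormRe_add_smul_le {A B : Matrix n n ℂ} (hA : A.IsHermitian)
    (hB : B.IsHermitian) (z w : n → ℂ) :
    ∃ ω : ℂ, ‖ω‖ = 1 ∧ A.quadFormRe (z + ω • w) ≤ A.quadFormRe z + A.quadFormRe w ∧
      B.quadFormRe (z + ω • w) ≤ B.quadFormRe z + B.quadFormRe w := by
  obtain ⟨ω, hω, hωA, hωB⟩ :=
    Complex.exists_norm_eq_one_re_mul_nonpos (star z ⬝ᵥ A *ᵥ w) (star z ⬝ᵥ B *ᵥ w)
  refine ⟨ω, hω, ?_, ?_⟩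
  · rw [quadFormRe_add_smul hA z w hω]; linarith
  · rw [quadFormRe_add_smul hB z w hω]; linarith

lemma exists_quadFormRe_sum_smul_le {A B : Matrix n n ℂ} (hA : A.IsHermitian)
    (hB : B.IsHermitian) (x : ι → n → ℂ) (s : Finset ι) :
    ∃ ω : ι → ℂ, (∀ k, ‖ω k‖ = 1) ∧
      A.quadFormRe (∑ k ∈ s, ω k • x k) ≤ ∑ k ∈ s, A.quadFormRe (x k) ∧
      B.quadFormRe (∑ k ∈ s, ω k • x k) ≤ ∑ k ∈ s, B.quadFormRe (x k) := by
  classical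
  induction s using Finset.induction_on with
  | empty => exact ⟨fun _ => 1, by simp, by simp [quadFormRe], by simp [quadFormRe]⟩
  | insert a s ha ih =>
    obtain ⟨ω, hω, hωA, hωB⟩ := ih
    obtain ⟨c, hc, hcA, hcB⟩ := exists_quadFormRe_add_smul_le hA hB (∑ k ∈ s, ω k • x k) (x a)
    have hsum : ∑ k ∈ insert a s, Function.update ω a c k • x k =
        ∑ k ∈ s, ω k • x k + c • x a := by
      rw [Finset.sum_insert ha, Function.update_self, add_comm]
      congr 1
      exact Finset.sum_congr rfl fun k hk => by
        rw [Function.update_of_ne (ne_of_mem_of_not_mem hk ha)]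
    refine ⟨Function.update ω a c, fun k => ?_, ?_, ?_⟩
    · rcases eq_or_ne k a with rfl | hk
      · simpa using hc
      · simpa [hk] using hω k
    · rw [hsum, Finset.sum_insert ha]; linarith
    · rw [hsum, Finset.sum_insert ha]; linarith

lemma re_trace_conjTranspose_mul_mul [Fintype ι] (A : Matrix n n ℂ) (X : Matrix n ι ℂ) :
    (Xᴴ * A * X).trace.re = ∑ k, A.quadFormRe (X.col k) := by
  classical
  rw [trace, Complex.re_sum]
  refine Finset.sum_congr rfl fun k _ => ?_
  rw [quadFormRe, ← mulVec_single_one, star_mulVec_dotProduct_mulVec_mulVec]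
  simp

lemma exists_quadFormRe_mulVec_le_trace [Fintype ι] {A B : Matrix n n ℂ} (hA : A.IsHermitian)
    (hB : B.IsHermitian) (X : Matrix n ι ℂ) :
    ∃ ω : ι → ℂ, (∀ k, ‖ω k‖ = 1) ∧ A.quadFormRe (X *ᵥ ω) ≤ (Xᴴ * A * X).trace.re ∧
      B.quadFormRe (X *ᵥ ω) ≤ (Xᴴ * B * X).trace.re := by
  simpa only [re_trace_conjTranspose_mul_mul, ← mulVec_eq_sum_smul_col] using
    exists_quadFormRe_sum_smul_le hA hB X.col Finset.univ

lemma star_dotProduct_diagonal_mulVec_of_norm_eq_one [DecidableEq n] (v ω : n → ℂ)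
    (hω : ∀ k, ‖ω k‖ = 1) : star ω ⬝ᵥ diagonal v *ᵥ ω = ∑ k, v k := by
  refine Finset.sum_congr rfl fun k _ => ?_
  rw [mulVec_diagonal, Pi.star_apply, mul_left_comm, Complex.star_def, Complex.conj_mul', hω k]
  simp

lemma quadFormRe_one_mulVec_of_isDiag [DecidableEq n] [Fintype ι] [DecidableEq ι]
    {X : Matrix n ι ℂ} (hX : (Xᴴ * X).IsDiag) {ω : ι → ℂ} (hω : ∀ k, ‖ω k‖ = 1) :
    quadFormRe 1 (X *ᵥ ω) = (Xᴴ * X).trace.re := by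
  rw [quadFormRe, star_mulVec_dotProduct_mulVec_mulVec, Matrix.mul_one, ← hX.diagonal_diag,
    star_dotProduct_diagonal_mulVec_of_norm_eq_one _ _ hω, trace_diagonal]

lemma isBounded_setOf_quadFormRe_one_le [DecidableEq n] (p : ℝ) :
    Bornology.IsBounded {x : n → ℂ | quadFormRe 1 x ≤ p} := by
  refine (Metric.isBounded_iff_subset_closedBall 0).2 ⟨√p, fun x hx => ?_⟩
  rw [Metric.mem_closedBall, dist_zero_right, pi_norm_le_iff_of_nonneg (Real.sqrt_nonneg p)]
  intro i
  refine Real.le_sqrt_of_sq_le (le_trans ?_ hx)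
  rw [quadFormRe_one]
  exact Finset.single_le_sum (f := fun j => ‖x j‖ ^ 2) (fun j _ => by positivity)
    (Finset.mem_univ i)

lemma exists_forall_quadFormRe_le [DecidableEq n] (Q L : Matrix n n ℂ) {p η : ℝ} (hp : 0 ≤ p)
    (hη : 0 ≤ η) :
    ∃ x : n → ℂ, (quadFormRe 1 x ≤ p ∧ L.quadFormRe x ≤ η) ∧
      ∀ y, quadFormRe 1 y ≤ p → L.quadFormRe y ≤ η → Q.quadFormRe x ≤ Q.quadFormRe y := by
  have hK : IsCompact {x : n → ℂ | quadFormRe 1 x ≤ p ∧ L.quadFormRe x ≤ η} :=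
    Metric.isCompact_of_isClosed_isBounded
      ((isClosed_le (continuous_quadFormRe 1) continuous_const).inter
        (isClosed_le (continuous_quadFormRe L) continuous_const))
      ((isBounded_setOf_quadFormRe_one_le p).subset fun x hx => hx.1)
  obtain ⟨x, hx, hmin⟩ := hK.exists_isMinOn ⟨0, by simp [quadFormRe, hp, hη]⟩
    (continuous_quadFormRe Q).continuousOn
  exact ⟨x, hx, fun y hyp hyη => hmin ⟨hyp, hyη⟩⟩

end Matrix

/-- Theorem 4 (rank-one power allocation): the problem `min tr(XᴴQX)` over
pairs `(X, Φ)` with `Φ` diagonal with nonnegative real entries, `XᴴX = Φ`,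
`tr(Φ) ≤ p` and `tr(XᴴLX) ≤ η` has a global minimizer `(X*, Φ*)` in which
`Φ*` has at most one nonzero diagonal entry, so `rank(X*) ≤ 1`. -/
theorem stmt_17 {M d : ℕ} (hd : 1 ≤ d) (Q L : Matrix (Fin M) (Fin M) ℂ)
    (hQ : Q.IsHermitian) (hL : L.PosSemidef) (p η : ℝ) (hp : 0 < p) (hη : 0 ≤ η) :
    ∃ (Xstar : Matrix (Fin M) (Fin d) ℂ) (Φstar : Matrix (Fin d) (Fin d) ℂ),
      (Φstar.IsDiag ∧ (∀ i, (Φstar i i).im = 0 ∧ 0 ≤ (Φstar i i).re) ∧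
        Xstarᴴ * Xstar = Φstar ∧ (Φstar.trace).re ≤ p ∧
        ((Xstarᴴ * L * Xstar).trace).re ≤ η) ∧
      (∀ i j, Φstar i i ≠ 0 → Φstar j j ≠ 0 → i = j) ∧ Xstar.rank ≤ 1 ∧
      ∀ (X : Matrix (Fin M) (Fin d) ℂ) (Φ : Matrix (Fin d) (Fin d) ℂ),
        Φ.IsDiag → (∀ i, (Φ i i).im = 0 ∧ 0 ≤ (Φ i i).re) →
        Xᴴ * X = Φ → (Φ.trace).re ≤ p → ((Xᴴ * L * X).trace).re ≤ η →
        ((Xstarᴴ * Q * Xstar).trace).re ≤ ((Xᴴ * Q * X).trace).re := by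
  obtain ⟨x, ⟨hxp, hxη⟩, hmin⟩ := exists_forall_quadFormRe_le Q L hp.le hη
  set j₀ : Fin d := ⟨0, hd⟩
  have hform (A : Matrix (Fin M) (Fin M) ℂ) := conjTranspose_vecMulVec_single_mul_mul A x j₀
  have hΦ : (vecMulVec x (Pi.single j₀ 1))ᴴ * vecMulVec x (Pi.single j₀ 1) =
      single j₀ j₀ (star x ⬝ᵥ x) := by simpa using hform 1
  refine ⟨_, _, ⟨diagonal_single j₀ (star x ⬝ᵥ x) ▸ isDiag_diagonal _, fun i => ?_, hΦ, ?_, ?_⟩,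
    fun i j hi hj => ?_, rank_vecMulVec_le _ _, ?_⟩
  · have hc : 0 ≤ single j₀ j₀ (star x ⬝ᵥ x) i i := by
      rw [single_apply]; split_ifs
      exacts [dotProduct_star_self_nonneg x, le_rfl]
    exact ⟨(Complex.nonneg_iff.1 hc).2.symm, (Complex.nonneg_iff.1 hc).1⟩
  · simpa [trace_single_eq_same, quadFormRe] using hxp
  · rw [hform, trace_single_eq_same]; exact hxη
  · have h (k : Fin d) (hk : single j₀ j₀ (star x ⬝ᵥ x) k k ≠ 0) : k = j₀ := by
      by_contra hne; exact hk (by simp [Ne.symm hne])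
    rw [h i hi, h j hj]
  · rintro X _ hXdiag - rfl hXp hXη
    obtain ⟨ω, hω, hωL, hωQ⟩ := exists_quadFormRe_mulVec_le_trace hL.isHermitian hQ X
    rw [hform, trace_single_eq_same]
    calc Q.quadFormRe x ≤ Q.quadFormRe (X *ᵥ ω) :=
          hmin _ (by rwa [quadFormRe_one_mulVec_of_isDiag hXdiag hω]) (hωL.trans hXη)
      _ ≤ _ := hωQ
end
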